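/- Let Q be a connected quiver with at least three vertices. If Q is of finite mutation type, then every edge of Q is a single edge or a double edge; that is, |B^Q_{ij}| ≤ 2 for all vertices i, j. -/

import Mathlib

open scoped Classical

/-- A quiver is encoded by its skew-symmetric exchange matrix. -/
def IsSkewQ {n : ℕ} (B : Matrix (Fin n) (Fin n) ℤ) : Prop :=
  ∀ i j, B j i = - B i j

/-- Fomin-Zelevinsky mutation of a skew-symmetric matrix at vertex `k`. -/
def mutate {n : ℕ} (B : Matrix (Fin n) (Fin n) ℤ) (k : Fin n) : Matrix (Fin n) (Fin n) ℤ :=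
  Matrix.of fun i j =>
    if i = k ∨ j = k then - B i j
    else B i j + Int.sign (B i k) * max (B i k * B k j) 0

def mutateList {n : ℕ} (B : Matrix (Fin n) (Fin n) ℤ) (l : List (Fin n)) :
    Matrix (Fin n) (Fin n) ℤ :=
  l.foldl mutate B

/-- `C` is obtained from `B` by a finite sequence of mutations followed by a
simultaneous relabeling of the index set. -/
def MutEquiv {n m : ℕ} (B : Matrix (Fin n) (Fin n) ℤ) (C : Matrix (Fin m) (Fin m) ℤ) : Prop :=
  ∃ (l : List (Fin n)) (σ : Fin m ≃ Fin n), C = (mutateList B l).submatrix ⇑σ ⇑σ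

/-- Finite mutation type: the mutation class is finite. -/
def FiniteMutationType {n : ℕ} (B : Matrix (Fin n) (Fin n) ℤ) : Prop :=
  {C : Matrix (Fin n) (Fin n) ℤ | MutEquiv B C}.Finite

/-- The underlying undirected graph of the quiver. -/
def quiverGraph {n : ℕ} (B : Matrix (Fin n) (Fin n) ℤ) : SimpleGraph (Fin n) where
  Adj i j := i ≠ j ∧ (B i j ≠ 0 ∨ B j i ≠ 0)
  symm := ⟨fun i j h => ⟨h.1.symm, h.2.symm⟩⟩
  loopless := ⟨fun i h => h.1 rfl⟩

def ConnectedQ {n : ℕ} (B : Matrix (Fin n) (Fin n) ℤ) : Prop :=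
  (quiverGraph B).Connected

def SimplyLaced {n : ℕ} (B : Matrix (Fin n) (Fin n) ℤ) : Prop :=
  ∀ i j, |B i j| ≤ 1

/-- The quiver (matrix) is a cycle: the vertices can be labeled by `ZMod m` so that
adjacency is exactly between consecutive labels. -/
def IsCycleMat {m : ℕ} (C : Matrix (Fin m) (Fin m) ℤ) : Prop :=
  3 ≤ m ∧ ∃ ρ : ZMod m ≃ Fin m, ∀ i j : ZMod m,
    C (ρ i) (ρ j) ≠ 0 ↔ (j = i + 1 ∨ i = j + 1)

/-- The quiver is an oriented cycle. -/
def IsOrientedCycleMat {m : ℕ} (C : Matrix (Fin m) (Fin m) ℤ) : Prop :=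
  3 ≤ m ∧ ∃ ρ : ZMod m ≃ Fin m,
    (∀ i j : ZMod m, C (ρ i) (ρ j) ≠ 0 ↔ (j = i + 1 ∨ i = j + 1)) ∧
    (∀ i : ZMod m, 0 < C (ρ i) (ρ (i + 1)))

def IsNonOrientedCycleMat {m : ℕ} (C : Matrix (Fin m) (Fin m) ℤ) : Prop :=
  IsCycleMat C ∧ ¬ IsOrientedCycleMat C

/-- A double edge: two vertices joined by an edge of weight 2. -/
def IsDoubleEdgeMat {m : ℕ} (C : Matrix (Fin m) (Fin m) ℤ) : Prop :=
  m = 2 ∧ ∃ i j : Fin m, i ≠ j ∧ (C i j = 2 ∨ C i j = -2)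

/-- The Dynkin tree D4: a center joined by single edges (arbitrarily oriented) to
three pairwise non-adjacent vertices. -/
def IsD4Mat {m : ℕ} (C : Matrix (Fin m) (Fin m) ℤ) : Prop :=
  m = 4 ∧ ∃ c : Fin m,
    (∀ i, i ≠ c → (C c i = 1 ∨ C c i = -1)) ∧
    (∀ i j, i ≠ c → j ≠ c → i ≠ j → C i j = 0)

/-- Two adjacent oriented simply-laced triangles sharing the edge `{c,d}`,
with `a`, `b` non-adjacent. -/
def IsTwoTrianglesMat {m : ℕ} (C : Matrix (Fin m) (Fin m) ℤ) : Prop :=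
  m = 4 ∧ ∃ a b c d : Fin m,
    a ≠ b ∧ a ≠ c ∧ a ≠ d ∧ b ≠ c ∧ b ≠ d ∧ c ≠ d ∧
    C a b = 0 ∧ C b a = 0 ∧
    C a c = 1 ∧ C c d = 1 ∧ C d a = 1 ∧ C b c = 1 ∧ C d b = 1

/-- Basic quivers: D4, two adjacent oriented triangles, or a simply-laced
oriented cycle with at least 4 vertices. -/
def IsBasicMat {m : ℕ} (C : Matrix (Fin m) (Fin m) ℤ) : Prop :=
  IsD4Mat C ∨ IsTwoTrianglesMat C ∨
    (4 ≤ m ∧ (∀ i j, |C i j| ≤ 1) ∧ IsOrientedCycleMat C)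

def HasBasicSubquiver {n : ℕ} (B : Matrix (Fin n) (Fin n) ℤ) : Prop :=
  ∃ (m : ℕ) (f : Fin m ↪ Fin n), IsBasicMat (B.submatrix ⇑f ⇑f)

/-- Build a skew-symmetric matrix from a list of weighted arrows. -/
def ofEdges (n : ℕ) (E : List (Fin n × Fin n × ℤ)) : Matrix (Fin n) (Fin n) ℤ :=
  Matrix.of fun i j =>
    E.foldl (fun acc e =>
      acc + (if e.1 = i ∧ e.2.1 = j then e.2.2 else 0)
          + (if e.1 = j ∧ e.2.1 = i then - e.2.2 else 0)) 0

def E6mat : Matrix (Fin 6) (Fin 6) ℤ :=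
  ofEdges 6 [(0,1,1),(1,2,1),(2,3,1),(3,4,1),(2,5,1)]

def E7mat : Matrix (Fin 7) (Fin 7) ℤ :=
  ofEdges 7 [(0,1,1),(1,2,1),(2,3,1),(3,4,1),(4,5,1),(2,6,1)]

def E8mat : Matrix (Fin 8) (Fin 8) ℤ :=
  ofEdges 8 [(0,1,1),(1,2,1),(2,3,1),(3,4,1),(4,5,1),(5,6,1),(2,7,1)]

def E6affMat : Matrix (Fin 7) (Fin 7) ℤ :=
  ofEdges 7 [(0,1,1),(1,2,1),(2,3,1),(3,4,1),(2,5,1),(5,6,1)]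

def E7affMat : Matrix (Fin 8) (Fin 8) ℤ :=
  ofEdges 8 [(0,1,1),(1,2,1),(2,3,1),(3,4,1),(4,5,1),(5,6,1),(3,7,1)]

def E8affMat : Matrix (Fin 9) (Fin 9) ℤ :=
  ofEdges 9 [(0,1,1),(1,2,1),(2,3,1),(3,4,1),(4,5,1),(5,6,1),(6,7,1),(2,8,1)]

/-- E6^(1,1): core b₁=0, b₂=1 (weight-2 arrow b₁→b₂), a₁=2, a₂=3, a₃=4 in oriented
triangles, with one extra path vertex attached at each aᵢ. -/
def E611Mat : Matrix (Fin 8) (Fin 8) ℤ :=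
  ofEdges 8 [(0,1,2),(2,0,1),(1,2,1),(3,0,1),(1,3,1),(4,0,1),(1,4,1),(2,5,1),(3,6,1),(4,7,1)]

def E711Mat : Matrix (Fin 9) (Fin 9) ℤ :=
  ofEdges 9 [(0,1,2),(2,0,1),(1,2,1),(3,0,1),(1,3,1),(4,0,1),(1,4,1),
             (2,5,1),(5,6,1),(4,7,1),(7,8,1)]

def E811Mat : Matrix (Fin 10) (Fin 10) ℤ :=
  ofEdges 10 [(0,1,2),(2,0,1),(1,2,1),(3,0,1),(1,3,1),(4,0,1),(1,4,1),
              (2,5,1),(4,6,1),(6,7,1),(7,8,1),(8,9,1)]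

/-- X6: c=0, a₁=1, a₂=2, b₁=3, b₂=4, d=5. -/
def X6mat : Matrix (Fin 6) (Fin 6) ℤ :=
  ofEdges 6 [(0,1,1),(2,0,1),(0,3,1),(4,0,1),(1,2,2),(3,4,2),(0,5,1)]

/-- X7: c=0, aᵢ=1,3,5, a′ᵢ=2,4,6. -/
def X7mat : Matrix (Fin 7) (Fin 7) ℤ :=
  ofEdges 7 [(0,1,1),(1,2,2),(2,0,1),(0,3,1),(3,4,2),(4,0,1),(0,5,1),(5,6,2),(6,0,1)]

/-- The kernel of B mod 2. -/
def Vbar0 {n : ℕ} (B : Matrix (Fin n) (Fin n) ℤ) : Submodule (ZMod 2) (Fin n → ZMod 2) :=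
  LinearMap.ker (Matrix.mulVecLin (B.map (fun x : ℤ => (x : ZMod 2))))

/-- A basic radical vector: a mod-2 radical vector whose support has exactly two
vertices or is a cycle. -/
def IsBasicRadical {n : ℕ} (B : Matrix (Fin n) (Fin n) ℤ) (u : Fin n → ZMod 2) : Prop :=
  u ∈ Vbar0 B ∧
    ({i | u i ≠ 0}.ncard = 2 ∨
      ∃ (m : ℕ) (f : Fin m ↪ Fin n),
        Set.range ⇑f = {i | u i ≠ 0} ∧ IsCycleMat (B.submatrix ⇑f ⇑f))

/-- The span of the basic radical vectors. -/
def Vbar00 {n : ℕ} (B : Matrix (Fin n) (Fin n) ℤ) : Submodule (ZMod 2) (Fin n → ZMod 2) :=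
  Submodule.span (ZMod 2) {u | IsBasicRadical B u}


/-!
If `|b_ij| ≥ 3`, connectedness provides a third vertex `q` joined to `i` or `j`. Mutating only at
vertices of `{i, j, q}` commutes with restricting to that full subquiver, so it suffices that the
triangle on `{i, j, q}` has unbounded edge weights under mutation. A few mutations at `i` and `j`
turn it into an oriented 3-cycle with weights `x ≥ 3`, `a, b ≥ 1` (up to an overall reversal).
Mutating at the vertex opposite the lighter of the edges `a ≤ b` replaces it by `x b - a > b`, so
the cycle stays oriented while `a + b` strictly increases.
-/

section Mutation

variable {n : ℕ}

lemma mutate_neg (B : Matrix (Fin n) (Fin n) ℤ) (k : Fin n) : mutate (-B) k = -mutate B k := by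
  ext i j
  by_cases h : i = k ∨ j = k <;> simp [mutate, h, Int.sign_neg, add_comm]

lemma mutateList_neg (B : Matrix (Fin n) (Fin n) ℤ) (l : List (Fin n)) :
    mutateList (-B) l = -mutateList B l := by
  induction l generalizing B with
  | nil => rfl
  | cons k l ih => exact (congrArg (mutateList · l) (mutate_neg B k)).trans (ih _)

lemma mutateList_append (B : Matrix (Fin n) (Fin n) ℤ) (l₁ l₂ : List (Fin n)) :
    mutateList B (l₁ ++ l₂) = mutateList (mutateList B l₁) l₂ :=
  List.foldl_append ..

lemma mutate_submatrix {m : ℕ} (B : Matrix (Fin n) (Fin n) ℤ) {f : Fin m → Fin n}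
    (hf : Function.Injective f) (k : Fin m) :
    mutate (B.submatrix f f) k = (mutate B (f k)).submatrix f f := by
  ext i j
  simp [mutate, hf.eq_iff]

lemma mutateList_submatrix {m : ℕ} (B : Matrix (Fin n) (Fin n) ℤ) {f : Fin m → Fin n}
    (hf : Function.Injective f) (l : List (Fin m)) :
    mutateList (B.submatrix f f) l = (mutateList B (l.map f)).submatrix f f := by
  induction l generalizing B with
  | nil => rfl
  | cons k l ih =>
    exact (congrArg (mutateList · l) (mutate_submatrix B hf k)).trans (ih _)

lemma FiniteMutationType.bddAbove_range {B : Matrix (Fin n) (Fin n) ℤ}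
    (hB : FiniteMutationType B) (g : Matrix (Fin n) (Fin n) ℤ → ℤ) :
    BddAbove (Set.range fun l => g (mutateList B l)) := by
  refine (hB.image g).bddAbove.mono ?_
  rintro _ ⟨l, rfl⟩
  exact ⟨_, ⟨l, Equiv.refl _, by simp⟩, rfl⟩

lemma FiniteMutationType.bddAbove_range_submatrix {m : ℕ} {B : Matrix (Fin n) (Fin n) ℤ}
    (hB : FiniteMutationType B) {f : Fin m → Fin n} (hf : Function.Injective f)
    (g : Matrix (Fin m) (Fin m) ℤ → ℤ) :
    BddAbove (Set.range fun l => g (mutateList (B.submatrix f f) l)) := by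
  refine (hB.bddAbove_range fun C => g (C.submatrix f f)).mono ?_
  rintro _ ⟨l, rfl⟩
  exact ⟨l.map f, by simp only [mutateList_submatrix B hf]⟩

def ReachableUpToSign (B C : Matrix (Fin n) (Fin n) ℤ) : Prop :=
  ∃ l, mutateList B l = C ∨ mutateList B l = -C

lemma ReachableUpToSign.refl (B : Matrix (Fin n) (Fin n) ℤ) : ReachableUpToSign B B :=
  ⟨[], Or.inl rfl⟩

lemma ReachableUpToSign.trans {B C D : Matrix (Fin n) (Fin n) ℤ} (hBC : ReachableUpToSign B C)
    (hCD : ReachableUpToSign C D) : ReachableUpToSign B D := by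
  obtain ⟨l₁, h₁⟩ := hBC
  obtain ⟨l₂, h₂⟩ := hCD
  refine ⟨l₁ ++ l₂, ?_⟩
  rw [mutateList_append]
  rcases h₁ with h₁ | h₁ <;> rcases h₂ with h₂ | h₂ <;>
    simp [h₁, h₂, mutateList_neg]

end Mutation

section Triangle

/-- The quiver on three vertices with arrows `0 → 1`, `1 → 2`, `2 → 0` of weights `x`, `y`, `z`. -/
def triangleMat (x y z : ℤ) : Matrix (Fin 3) (Fin 3) ℤ :=
  !![0, x, -z; -x, 0, y; z, -y, 0]

variable {x y z : ℤ}

lemma eq_triangleMat_of_isSkewQ {C : Matrix (Fin 3) (Fin 3) ℤ} (hC : IsSkewQ C) :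
    C = triangleMat (C 0 1) (C 1 2) (C 2 0) := by
  have := hC 0 0; have := hC 1 1; have := hC 2 2
  have := hC 0 1; have := hC 1 2; have := hC 2 0
  ext i j
  fin_cases i <;> fin_cases j <;> simp [triangleMat] <;> omega

lemma neg_triangleMat : -triangleMat x y z = triangleMat (-x) (-y) (-z) := by
  ext i j
  fin_cases i <;> fin_cases j <;> simp [triangleMat]

lemma max_mul_zero_of_pos (hx : 0 < x) (y : ℤ) : max (x * y) 0 = x * max y 0 := by
  rw [mul_max_of_nonneg _ _ hx.le, mul_zero]

lemma sign_mul_max_mul_zero (hx : 0 < x) (y : ℤ) : y.sign * max (y * x) 0 = x * max y 0 := by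
  rcases lt_trichotomy y 0 with hy | rfl | hy
  · simp [Int.sign_eq_neg_one_of_neg hy, hy.le, (mul_neg_of_neg_of_pos hy hx).le]
  · simp
  · simp [Int.sign_eq_one_of_pos hy, hy.le, (mul_pos hx hy).le, mul_comm]

lemma mutate_triangleMat_zero (hx : 0 < x) :
    mutate (triangleMat x y z) 0 = -triangleMat x (x * max z 0 - y) z := by
  ext i j
  fin_cases i <;> fin_cases j <;>
    simp [mutate, triangleMat, Int.sign_eq_one_of_pos hx, sign_mul_max_mul_zero hx,
      max_mul_zero_of_pos hx, mul_self_nonneg] <;> ring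

lemma mutate_triangleMat_one (hx : 0 < x) :
    mutate (triangleMat x y z) 1 = -triangleMat x y (x * max y 0 - z) := by
  ext i j
  fin_cases i <;> fin_cases j <;>
    simp [mutate, triangleMat, Int.sign_eq_one_of_pos hx, sign_mul_max_mul_zero hx,
      max_mul_zero_of_pos hx, mul_self_nonneg] <;> ring

lemma reachableUpToSign_triangleMat_zero (hx : 0 < x) :
    ReachableUpToSign (triangleMat x y z) (triangleMat x (x * max z 0 - y) z) :=
  ⟨[0], Or.inr (mutate_triangleMat_zero hx)⟩

lemma reachableUpToSign_triangleMat_one (hx : 0 < x) :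
    ReachableUpToSign (triangleMat x y z) (triangleMat x y (x * max y 0 - z)) :=
  ⟨[1], Or.inr (mutate_triangleMat_one hx)⟩

lemma exists_reachableUpToSign_triangleMat_pos (hx : 0 < x) (hyz : y ≠ 0 ∨ z ≠ 0) :
    ∃ a b, 1 ≤ a ∧ 1 ≤ b ∧ ReachableUpToSign (triangleMat x y z) (triangleMat x a b) := by
  have of_one_le_fst : ∀ {y z : ℤ}, 1 ≤ y →
      ∃ a b, 1 ≤ a ∧ 1 ≤ b ∧ ReachableUpToSign (triangleMat x y z) (triangleMat x a b) := by
    intro y z hy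
    by_cases hz : 1 ≤ z
    · exact ⟨y, z, hy, hz, .refl _⟩
    · have h := reachableUpToSign_triangleMat_one (y := y) (z := z) hx
      rw [max_eq_left (by omega)] at h
      exact ⟨y, x * y - z, hy, by nlinarith, h⟩
  have of_one_le_snd : ∀ {y z : ℤ}, 1 ≤ z →
      ∃ a b, 1 ≤ a ∧ 1 ≤ b ∧ ReachableUpToSign (triangleMat x y z) (triangleMat x a b) := by
    intro y z hz
    by_cases hy : 1 ≤ y
    · exact of_one_le_fst hy
    · have h := reachableUpToSign_triangleMat_zero (y := y) (z := z) hx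
      rw [max_eq_left (by omega)] at h
      exact ⟨x * z - y, z, by nlinarith, hz, h⟩
  by_cases hy : 1 ≤ y
  · exact of_one_le_fst hy
  by_cases hz : 1 ≤ z
  · exact of_one_le_snd hz
  -- now `0` is a source and `1` a sink, so mutating at either of them only reverses arrows
  rcases lt_or_eq_of_le (not_lt.mp hz : z ≤ 0) with hz | rfl
  · have h := reachableUpToSign_triangleMat_one (y := y) (z := z) hx
    rw [max_eq_right (by omega), mul_zero, zero_sub] at h
    obtain ⟨a, b, ha, hb, h'⟩ := of_one_le_snd (y := y) (z := -z) (by omega)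
    exact ⟨a, b, ha, hb, h.trans h'⟩
  · have h := reachableUpToSign_triangleMat_zero (y := y) (z := 0) hx
    rw [max_self, mul_zero, zero_sub] at h
    obtain ⟨a, b, ha, hb, h'⟩ := of_one_le_fst (y := -y) (z := 0) (by omega)
    exact ⟨a, b, ha, hb, h.trans h'⟩

lemma exists_reachableUpToSign_triangleMat_add_lt (hx : 3 ≤ x) {a b : ℤ} (ha : 1 ≤ a)
    (hb : 1 ≤ b) : ∃ a' b', 1 ≤ a' ∧ 1 ≤ b' ∧ a + b < a' + b' ∧
      ReachableUpToSign (triangleMat x a b) (triangleMat x a' b') := by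
  rcases le_total a b with hab | hba
  · have h := reachableUpToSign_triangleMat_zero (y := a) (z := b) (by omega : 0 < x)
    rw [max_eq_left (by omega)] at h
    exact ⟨x * b - a, b, by nlinarith, hb, by nlinarith, h⟩
  · have h := reachableUpToSign_triangleMat_one (y := a) (z := b) (by omega : 0 < x)
    rw [max_eq_left (by omega)] at h
    exact ⟨a, x * a - b, ha, by nlinarith, by nlinarith, h⟩

lemma exists_reachableUpToSign_triangleMat_le_add (hx : 3 ≤ x) {a b : ℤ} (ha : 1 ≤ a)
    (hb : 1 ≤ b) (N : ℕ) : ∃ a' b', 1 ≤ a' ∧ 1 ≤ b' ∧ (N : ℤ) ≤ a' + b' ∧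
      ReachableUpToSign (triangleMat x a b) (triangleMat x a' b') := by
  induction N with
  | zero => exact ⟨a, b, ha, hb, by omega, .refl _⟩
  | succ N ih =>
    obtain ⟨a', b', ha', hb', hN, h⟩ := ih
    obtain ⟨a'', b'', ha'', hb'', hlt, h'⟩ :=
      exists_reachableUpToSign_triangleMat_add_lt hx ha' hb'
    exact ⟨a'', b'', ha'', hb'', by push_cast; omega, h.trans h'⟩

lemma not_bddAbove_triangleMat (hx : 3 ≤ |x|) (hyz : y ≠ 0 ∨ z ≠ 0) :
    ¬ BddAbove (Set.range fun l =>
      |mutateList (triangleMat x y z) l 1 2| + |mutateList (triangleMat x y z) l 2 0|) := by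
  wlog hpos : 0 < x generalizing x y z
  · have h := this (x := -x) (y := -y) (z := -z) (by rwa [abs_neg]) (by simpa using hyz)
      (by rw [le_abs'] at hx; omega)
    simpa [← neg_triangleMat, mutateList_neg] using h
  rintro ⟨M, hM⟩
  obtain ⟨a, b, ha, hb, h⟩ := exists_reachableUpToSign_triangleMat_pos hpos hyz
  obtain ⟨a', b', ha', hb', hN, h'⟩ :=
    exists_reachableUpToSign_triangleMat_le_add (abs_of_pos hpos ▸ hx) ha hb (M.toNat + 1)
  obtain ⟨l, hl⟩ := h.trans h'
  have hle : |mutateList (triangleMat x y z) l 1 2| + |mutateList (triangleMat x y z) l 2 0| ≤ M :=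
    hM ⟨l, rfl⟩
  rcases hl with hl | hl <;> rw [hl] at hle <;>
    simp [triangleMat, abs_of_pos (by omega : 0 < a'), abs_of_pos (by omega : 0 < b')] at hle <;>
    omega

end Triangle

lemma SimpleGraph.Connected.exists_adj_of_three_le_card {V : Type*} [Fintype V]
    {G : SimpleGraph V} (hG : G.Connected) (hV : 3 ≤ Fintype.card V) (i j : V) :
    ∃ p q, (p = i ∨ p = j) ∧ q ≠ i ∧ q ≠ j ∧ G.Adj p q := by
  classical
  obtain ⟨v, -, hv⟩ := Finset.exists_mem_notMem_of_card_lt_card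
    (s := {i, j}) (t := Finset.univ) (by
      have := Finset.card_le_two (a := i) (b := j)
      rw [Finset.card_univ]; omega)
  obtain ⟨d, -, hd, hd'⟩ := (hG.preconnected i v).some.exists_boundary_dart {i, j}
    (by simp) (by simpa using hv)
  simp only [Set.mem_insert_iff, Set.mem_singleton_iff, not_or] at hd hd'
  exact ⟨d.fst, d.snd, hd, hd'.1, hd'.2, d.adj⟩

/-- every edge of a connected finite-mutation-type quiver with at
least three vertices is a single or double edge. -/
theorem stmt0 {n : ℕ} (B : Matrix (Fin n) (Fin n) ℤ) (hB : IsSkewQ B) (hn : 3 ≤ n)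
    (hconn : ConnectedQ B) (hfin : FiniteMutationType B) :
    ∀ i j, |B i j| ≤ 2 := by
  intro i j
  by_contra! hij
  have hne : i ≠ j := by
    rintro rfl
    have : B i i = 0 := by linarith [hB i i]
    simp [this] at hij
  obtain ⟨p, q, hp, hqi, hqj, hadj⟩ :=
    hconn.exists_adj_of_three_le_card (by simpa using hn) i j
  have hf : Function.Injective ![i, j, q] := by
    simp [Function.Injective, Fin.forall_fin_succ, hne, hne.symm, hqi, hqi.symm, hqj, hqj.symm]
  have hT : B.submatrix ![i, j, q] ![i, j, q] = triangleMat (B i j) (B j q) (B q i) :=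
    eq_triangleMat_of_isSkewQ fun _ _ => hB _ _
  have hyz : B j q ≠ 0 ∨ B q i ≠ 0 := by
    have := hB p q
    have := hB i q
    rcases hp with rfl | rfl <;> rcases hadj.2 with h | h <;> omega
  refine not_bddAbove_triangleMat (x := B i j) (by omega) hyz ?_
  rw [← hT]
  exact hfin.bddAbove_range_submatrix hf fun C => |C 1 2| + |C 2 0|
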